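/- For n ≥ 2 and 1 ≤ r ≤ n−1, the number of 132-avoiding permutations of length n with exactly r short values whose last entry is greater than 1 equals |A(n, r−1)|, the number of 132-avoiding permutations of length n with exactly r−1 short values. -/

import Mathlib

open List

attribute [local instance] Classical.propDecidable

/-- `l` is a permutation of length `n`, i.e. a list containing each of `1,…,n` exactly once. -/
def IsPermList (n : ℕ) (l : List ℕ) : Prop :=
  l.Perm (List.range' 1 n)

/-- Two sequences (with distinct entries) are order-isomorphic: same length and the same
pairwise order relations. -/
def OrderIsoList (a b : List ℕ) : Prop :=
  a.length = b.length ∧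
    ∀ i j, i < j → j < a.length →
      (a.getD i 0 < a.getD j 0 ↔ b.getD i 0 < b.getD j 0)

/-- `l` contains the pattern `p`: some subsequence of `l` is order-isomorphic to `p`. -/
def ContainsPat (l p : List ℕ) : Prop :=
  ∃ s, s.Sublist l ∧ OrderIsoList s p

/-- `l` avoids the pattern `p`. -/
def AvoidsPat (l p : List ℕ) : Prop := ¬ ContainsPat l p

/-- Relabel the entries of a list of distinct naturals order-isomorphically with `1,…,m`. -/
def standardize (l : List ℕ) : List ℕ :=
  l.map fun x => (l.filter fun y => y ≤ x).length

/-- Insert the new maximum value `l.length + 1` immediately after the first `i` entries. -/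
def insertMax (l : List ℕ) (i : ℕ) : List ℕ :=
  l.take i ++ (l.length + 1) :: l.drop i

/-- The insertion step at position `i` for the pattern `p`: insert a new maximum after the
first `i` entries, keep the longest prefix avoiding `p` (i.e. remove the minimal suffix so
that the result avoids `p`), then standardize. -/
noncomputable def insStep (p l : List ℕ) (i : ℕ) : List ℕ :=
  standardize ((insertMax l i).take
    (Nat.findGreatest (fun k => AvoidsPat ((insertMax l i).take k) p)
      (insertMax l i).length))

/-- The entry at (0-indexed) position `i` of `l` is a right-to-left maximum: it is larger
than every entry to its right. -/
def IsRLMax (l : List ℕ) (i : ℕ) : Prop :=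
  ∀ j, i < j → j < l.length → l.getD j 0 < l.getD i 0

/-- The number of short values of `l`: entries that are not right-to-left maxima. -/
noncomputable def shortCount (l : List ℕ) : ℕ :=
  {i | i < l.length ∧ ¬ IsRLMax l i}.ncard

/-- `A132 n k` is the set of `132`-avoiding permutations of length `n` with exactly `k`
short values. -/
def A132 (n k : ℕ) : Set (List ℕ) :=
  {l | IsPermList n l ∧ AvoidsPat l [1, 3, 2] ∧ shortCount l = k}

/-!
A 132-avoiding permutation ending in `x` is `A ++ β ++ [x]` with every entry of `A` above `x`
and every entry of `β` below it; its short values are those of `A` together with all of `β`.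
If `x > 1`, splitting `β` at its maximum `x - 1` gives `β = u ++ [x - 1] ++ v` with `u` above
`v`, so `v` is a 132-avoider of `1, …, t`. Sending this permutation to
`A ++ u' ++ [x] ++ v ++ [t + 1]`, where `u'` is `u` with every entry raised by one, removes
exactly one short value, and it is a bijection onto `A(n, r - 1)`: a permutation there ends in
some `t + 1 < n` (as `r ≤ n - 1`), and `x` is recovered as its last entry above `t + 1`. Both
sets are thus parametrized by the same data, a `Blocks` satisfying `Blocks.Valid n r`.
-/

lemma shortCount_eq_count (l : List ℕ) :
    shortCount l = Nat.count (fun i => ¬ IsRLMax l i) l.length := by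
  rw [Nat.count_eq_card_filter_range, ← Set.ncard_coe_finset, shortCount]
  congr 1
  ext i
  simp

lemma isRLMax_cons_succ {a i : ℕ} {l : List ℕ} : IsRLMax (a :: l) (i + 1) ↔ IsRLMax l i := by
  constructor
  · intro h j hij hj
    simpa using h (j + 1) (by omega) (by simpa using hj)
  · rintro h (_ | j) hij hj
    · omega
    · simpa using h j (by omega) (by simpa using hj)

lemma isRLMax_cons_zero {a : ℕ} {l : List ℕ} : IsRLMax (a :: l) 0 ↔ ∀ b ∈ l, b < a := by
  simp only [IsRLMax, List.mem_iff_getElem]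
  constructor
  · rintro h b ⟨j, hj, rfl⟩
    simpa [hj] using h (j + 1) (by omega) (by simpa using hj)
  · rintro h (_ | j) hij hj
    · omega
    · simpa [List.getD_eq_getElem?_getD, show j < l.length by simpa using hj] using
        h _ ⟨j, by simpa using hj, rfl⟩

lemma shortCount_cons (a : ℕ) (l : List ℕ) :
    shortCount (a :: l) = shortCount l + if ∀ b ∈ l, b < a then 0 else 1 := by
  simp only [shortCount_eq_count, List.length_cons, Nat.count_succ', isRLMax_cons_succ,
    isRLMax_cons_zero]
  split_ifs <;> simp_all

lemma shortCount_nil : shortCount [] = 0 := by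
  simp [shortCount_eq_count]

lemma shortCount_append_of_forall_lt {u v : List ℕ} (h : ∀ a ∈ u, ∀ b ∈ v, b < a) :
    shortCount (u ++ v) = shortCount u + shortCount v := by
  induction u with
  | nil => simp [shortCount_nil]
  | cons c u ih =>
    have hcv : ∀ b ∈ v, b < c := h c (by simp)
    rw [List.cons_append, shortCount_cons, shortCount_cons,
      ih fun a ha => h a (by simp [ha])]
    simp only [List.mem_append, or_imp, forall_and, and_iff_left hcv]
    omega

lemma shortCount_append_singleton {u : List ℕ} {x : ℕ} (h : ∀ a ∈ u, a < x) :
    shortCount (u ++ [x]) = u.length := by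
  induction u with
  | nil => simp [shortCount_cons, shortCount_nil]
  | cons c u ih =>
    rw [List.cons_append, shortCount_cons, ih fun a ha => h a (by simp [ha]),
      if_neg fun hc => (hc x (by simp)).not_gt (h c (by simp))]
    rfl

lemma shortCount_append_append_singleton {A β : List ℕ} {x : ℕ} (hA : ∀ a ∈ A, x < a)
    (hβ : ∀ b ∈ β, b < x) : shortCount (A ++ (β ++ [x])) = shortCount A + β.length := by
  rw [shortCount_append_of_forall_lt, shortCount_append_singleton hβ]
  simp only [List.mem_append, List.mem_singleton]
  rintro a ha b (hb | rfl)
  · exact (hβ b hb).trans (hA a ha)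
  · exact hA a ha

def Avoids132 (l : List ℕ) : Prop :=
  ∀ a b c, [a, b, c] <+ l → a < c → c < b → False

lemma avoidsPat_132_iff {l : List ℕ} (hl : l.Nodup) : AvoidsPat l [1, 3, 2] ↔ Avoids132 l := by
  constructor
  · intro h a b c hsub hac hcb
    refine h ⟨[a, b, c], hsub, rfl, fun i j hij hj => ?_⟩
    simp only [List.length_cons, List.length_nil] at hj
    interval_cases j <;> interval_cases i <;> simp <;> omega
  · rintro h ⟨s, hsub, hlen, hord⟩
    obtain ⟨a, b, c, rfl⟩ := List.length_eq_three.mp (by simpa using hlen)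
    have hab := (hord 0 1 (by omega) (by simp)).2 (by simp)
    have hac := (hord 0 2 (by omega) (by simp)).2 (by simp)
    have hbc := mt (hord 1 2 (by omega) (by simp)).1 (by simp)
    have hnd := hsub.nodup hl
    simp only [List.getD_cons_zero, List.getD_cons_succ, List.nodup_cons, List.mem_cons]
      at hab hac hbc hnd
    exact h a b c hsub hac (by omega)

lemma Avoids132.sublist {l l' : List ℕ} (h : Avoids132 l) (hs : l' <+ l) : Avoids132 l' :=
  fun a b c hsub => h a b c (hsub.trans hs)

lemma Avoids132.map {l : List ℕ} (h : Avoids132 l) {f : ℕ → ℕ} (hf : ∀ a b, f a < f b → a < b) :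
    Avoids132 (l.map f) := by
  intro a b c hsub hac hcb
  obtain ⟨s, hs, hmap⟩ := List.sublist_map_iff.mp hsub
  obtain ⟨a', b', c', rfl⟩ :=
    List.length_eq_three.mp (by simpa using (congrArg List.length hmap).symm)
  simp only [List.map_cons, List.map_nil, List.cons.injEq, and_true] at hmap
  obtain ⟨rfl, rfl, rfl⟩ := hmap
  exact h a' b' c' hs (hf _ _ hac) (hf _ _ hcb)

lemma avoids132_append_iff {u v : List ℕ} :
    Avoids132 (u ++ v) ↔ Avoids132 u ∧ Avoids132 v ∧
      (∀ a ∈ u, ∀ b c, [b, c] <+ v → a < c → c < b → False) ∧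
      (∀ a b, [a, b] <+ u → ∀ c ∈ v, a < c → c < b → False) := by
  constructor
  · intro h
    refine ⟨h.sublist (List.sublist_append_left u v), h.sublist (List.sublist_append_right u v),
      fun a ha b c hbc => h a b c ?_, fun a b hab c hc => h a b c ?_⟩
    · exact (List.singleton_sublist.mpr ha).append hbc
    · exact hab.append (List.singleton_sublist.mpr hc)
  · rintro ⟨hu, hv, h12, h21⟩ a b c hsub
    obtain ⟨s, s', hss, hs, hs'⟩ := List.sublist_append_iff.mp hsub
    match s, s', hss with
    | [], _, rfl => exact hv a b c hs'
    | [_], _, rfl => exact h12 a (List.singleton_sublist.mp hs) b c hs'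
    | [_, _], _, rfl => exact h21 a b hs c (List.singleton_sublist.mp hs')
    | [_, _, _], [], rfl => exact hu a b c hs
    | _ :: _ :: _ :: _ :: _, _, h => simp at h
    | [_, _, _], _ :: _, h => simp at h

lemma avoids132_append {u v : List ℕ} (hu : Avoids132 u) (hv : Avoids132 v)
    (h : ∀ a ∈ u, ∀ b ∈ v, b < a) : Avoids132 (u ++ v) :=
  avoids132_append_iff.mpr ⟨hu, hv,
    fun a ha b c hbc hac _ => (h a ha c (hbc.subset (by simp))).not_gt hac,
    fun a b hab c hc hac _ => (h a (hab.subset (by simp)) c hc).not_gt hac⟩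

lemma avoids132_append_cons {u v : List ℕ} {m : ℕ} (hu : Avoids132 u) (hv : Avoids132 v)
    (hum : ∀ a ∈ u, a < m) (hvm : ∀ b ∈ v, b < m) (huv : ∀ a ∈ u, ∀ b ∈ v, b < a) :
    Avoids132 (u ++ m :: v) := by
  have hmv : Avoids132 (m :: v) := by
    refine avoids132_append_iff (u := [m]).mpr ⟨fun a b c h => ?_, hv, ?_, fun a b h => ?_⟩
    · simpa using h.length_le
    · simp only [List.mem_singleton]
      rintro a rfl b c hbc hmc _
      exact (hvm c (hbc.subset (by simp))).not_gt hmc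
    · simpa using h.length_le
  refine avoids132_append_iff.mpr ⟨hu, hmv, fun a ha b c hbc hac _ => ?_,
    fun a b hab c hc hac hcb => ?_⟩
  · exact (huv a ha c ((hbc.tail).subset (by simp))).not_gt hac
  · rcases List.mem_cons.mp hc with rfl | hc
    · exact (hum b (hab.subset (by simp))).not_gt hcb
    · exact (huv a (hab.subset (by simp)) c hc).not_gt hac

lemma avoids132_append_append_singleton_iff {A β : List ℕ} {x : ℕ} (hA : ∀ a ∈ A, x < a)
    (hβ : ∀ b ∈ β, b < x) : Avoids132 (A ++ (β ++ [x])) ↔ Avoids132 A ∧ Avoids132 β := by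
  refine ⟨fun h => ⟨h.sublist (by simp), h.sublist (by simp)⟩, fun ⟨hA', hβ'⟩ => ?_⟩
  refine avoids132_append hA' (avoids132_append_cons hβ' (by simp [Avoids132]) hβ (by simp)
    (by simp)) ?_
  simp only [List.mem_append, List.mem_singleton]
  rintro a ha b (hb | rfl)
  · exact (hβ b hb).trans (hA a ha)
  · exact hA a ha

lemma filter_append_append_singleton {A β : List ℕ} {x : ℕ} (hA : ∀ a ∈ A, x < a)
    (hβ : ∀ b ∈ β, b < x) :
    (A ++ (β ++ [x])).filter (x < ·) = A ∧ (A ++ (β ++ [x])).filter (· < x) = β := by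
  have hA₁ : A.filter (x < ·) = A := List.filter_eq_self.mpr (by simpa using hA)
  have hA₂ : A.filter (· < x) = [] := List.filter_eq_nil_iff.mpr fun a ha => by
    simpa using (hA a ha).le
  have hβ₁ : β.filter (x < ·) = [] := List.filter_eq_nil_iff.mpr fun b hb => by
    simpa using (hβ b hb).le
  have hβ₂ : β.filter (· < x) = β := List.filter_eq_self.mpr (by simpa using hβ)
  simp [List.filter_append, hA₁, hA₂, hβ₁, hβ₂]

lemma append_append_singleton_inj {A β A' β' : List ℕ} {x x' : ℕ} (hA : ∀ a ∈ A, x < a)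
    (hβ : ∀ b ∈ β, b < x) (hA' : ∀ a ∈ A', x' < a) (hβ' : ∀ b ∈ β', b < x')
    (h : A ++ (β ++ [x]) = A' ++ (β' ++ [x'])) : A = A' ∧ β = β' ∧ x = x' := by
  obtain rfl : x = x' := by simpa using congrArg List.getLast? h
  obtain ⟨hA₁, hβ₁⟩ := filter_append_append_singleton hA hβ
  obtain ⟨hA₂, hβ₂⟩ := filter_append_append_singleton hA' hβ'
  exact ⟨hA₁.symm.trans (h ▸ hA₂), hβ₁.symm.trans (h ▸ hβ₂), rfl⟩

lemma filter_append_filter_of_pairwise {x : ℕ} {l : List ℕ}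
    (h : l.Pairwise fun a b => ¬ (a < x ∧ x < b)) (hx : x ∉ l) :
    l.filter (x < ·) ++ l.filter (· < x) = l := by
  induction l with
  | nil => rfl
  | cons c l ih =>
    rw [List.pairwise_cons] at h
    simp only [List.mem_cons, not_or] at hx
    rcases Nat.lt_or_gt_of_ne hx.1 with hc | hc
    · simp [hc, Nat.lt_asymm hc, ih h.2 hx.2]
    · have hl : ∀ b ∈ l, b < x := fun b hb =>
        lt_of_le_of_ne (not_lt.mp fun hxb => h.1 b hb ⟨hc, hxb⟩) fun hbx => hx.2 (hbx ▸ hb)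
      have hl₁ : l.filter (x < ·) = [] := List.filter_eq_nil_iff.mpr fun b hb => by
        simpa using (hl b hb).le
      have hl₂ : l.filter (· < x) = l := List.filter_eq_self.mpr (by simpa using hl)
      simp [hc, Nat.lt_asymm hc, hl₁, hl₂]

lemma Avoids132.filter_append_filter_append_getLast {l : List ℕ} {x : ℕ} (hl : l.Nodup)
    (h : Avoids132 l) (hx : l.getLast? = some x) :
    l.filter (x < ·) ++ (l.filter (· < x) ++ [x]) = l := by
  obtain ⟨ys, rfl⟩ := List.getLast?_eq_some_iff.mp hx
  have hxys : x ∉ ys := fun hx => (List.nodup_append.mp hl).2.2 x hx x (by simp) rfl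
  have hpair : ys.Pairwise fun a b => ¬ (a < x ∧ x < b) :=
    List.pairwise_iff_forall_sublist.mpr fun hab ⟨hax, hxb⟩ =>
      (avoids132_append_iff.mp h).2.2.2 _ _ hab x (by simp) hax hxb
  simp [List.filter_append, ← List.append_assoc, filter_append_filter_of_pairwise hpair hxys]

lemma mem_range'_of_perm {l : List ℕ} {s n a : ℕ} (h : l ~ range' s n) (ha : a ∈ l) :
    s ≤ a ∧ a < s + n :=
  List.mem_range'_1.mp (h.subset ha)

lemma count_of_perm_range' {l : List ℕ} {s n : ℕ} (h : l ~ range' s n) (a : ℕ) :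
    l.count a = if s ≤ a ∧ a < s + n then 1 else 0 := by
  simp [h.count_eq, (List.nodup_range' ..).count, List.mem_range'_1]

lemma List.Perm.filter_range' {l : List ℕ} {s n s' n' : ℕ} (h : l ~ range' s n) (p : ℕ → Bool)
    (hp : ∀ a, (s ≤ a ∧ a < s + n) ∧ p a ↔ s' ≤ a ∧ a < s' + n') :
    l.filter p ~ range' s' n' :=
  (h.filter p).trans <| (List.perm_ext_iff_of_nodup ((List.nodup_range' ..).filter p)
    (List.nodup_range' ..)).mpr fun a => by simpa [List.mem_range'_1] using hp a

lemma map_sub_one_range' (s n : ℕ) : (range' (s + 1) n).map (· - 1) = range' s n := by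
  simp [List.range'_eq_map_range, Function.comp_def, Nat.add_right_comm s 1]

lemma map_add_one_range' (s n : ℕ) : (range' s n).map (· + 1) = range' (s + 1) n := by
  simp [List.range'_eq_map_range, Function.comp_def, Nat.add_right_comm s]

lemma perm_range'_of_append_of_forall_lt {u v : List ℕ} {s n : ℕ} (h : u ++ v ~ range' s n)
    (huv : ∀ a ∈ u, ∀ b ∈ v, b < a) :
    v ~ range' s v.length ∧ u ~ range' (s + v.length) u.length := by
  have hn : n = u.length + v.length := by simpa using h.length_eq.symm
  have hbound : ∀ b ∈ v, b < s + v.length := by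
    intro b hb
    by_contra! hge
    -- every value from `s` up to `b` must then lie in `v`, which is too many
    have hsub : range' s (v.length + 1) ⊆ v := fun c hc => by
      have hc := List.mem_range'_1.mp hc
      have hbn := mem_range'_of_perm h (List.mem_append_right u hb)
      rcases List.mem_append.mp (h.symm.subset (List.mem_range'_1.mpr ⟨hc.1, by omega⟩))
        with hcu | hcv
      · exact absurd (huv c hcu b hb) (by omega)
      · exact hcv
    simpa using ((List.nodup_range' ..).subperm hsub).length_le
  have hv : v ~ range' s v.length :=
    ((h.nodup_iff.mpr (List.nodup_range' ..)).of_append_right.subperm fun b hb =>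
      List.mem_range'_1.mpr ⟨(mem_range'_of_perm h (List.mem_append_right u hb)).1,
        hbound b hb⟩).perm_of_length_le (by simp)
  refine ⟨hv, List.perm_iff_count.mpr fun a => ?_⟩
  have hcount := h.count_eq a
  rw [List.count_append, count_of_perm_range' hv, count_of_perm_range' (List.Perm.refl _)]
    at hcount
  rw [count_of_perm_range' (List.Perm.refl _)]
  split_ifs at hcount ⊢ <;> omega

lemma Avoids132.exists_eq_append_append_getLast {l : List ℕ} {s n x : ℕ} (h : Avoids132 l)
    (hperm : l ~ range' s n) (hx : l.getLast? = some x) :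
    s ≤ x ∧ x < s + n ∧ ∃ A β, l = A ++ (β ++ [x]) ∧ A ~ range' (x + 1) (s + n - (x + 1)) ∧
      β ~ range' s (x - s) ∧ Avoids132 A ∧ Avoids132 β := by
  obtain ⟨hsx, hxn⟩ := mem_range'_of_perm hperm (List.mem_of_getLast? hx)
  refine ⟨hsx, hxn, _, _,
    (h.filter_append_filter_append_getLast (hperm.nodup_iff.mpr (List.nodup_range' ..)) hx).symm,
    hperm.filter_range' _ fun a => ?_, hperm.filter_range' _ fun a => ?_,
    h.sublist List.filter_sublist, h.sublist List.filter_sublist⟩ <;>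
  · simp only [decide_eq_true_eq]
    omega

lemma Avoids132.exists_eq_append_cons_max {β : List ℕ} {s n m : ℕ} (h : Avoids132 β)
    (hperm : β ~ range' s n) (hm : m + 1 = s + n) (hn : 0 < n) :
    ∃ u v, β = u ++ m :: v ∧ v ~ range' s v.length ∧ u ~ range' (s + v.length) u.length ∧
      Avoids132 u ∧ Avoids132 v := by
  have hmβ : m ∈ β := hperm.symm.subset (List.mem_range'_1.mpr ⟨by omega, by omega⟩)
  obtain ⟨u, v, rfl⟩ := List.append_of_mem hmβ
  have hnd := hperm.nodup_iff.mpr (List.nodup_range' ..)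
  have huv : ∀ a ∈ u, ∀ b ∈ v, b < a := by
    intro a ha b hb
    have hbβ : b ∈ u ++ m :: v := List.mem_append_right u (List.mem_cons_of_mem m hb)
    have hbm : b < m := lt_of_le_of_ne (by have := mem_range'_of_perm hperm hbβ; omega)
      fun hbm => (List.nodup_cons.mp (List.nodup_append.mp hnd).2.1).1 (hbm ▸ hb)
    have hab : a ≠ b := fun hab => (List.nodup_append.mp hnd).2.2 a ha b (by simp [hb]) hab
    have hsub : [a, m, b] <+ u ++ m :: v :=
      (List.singleton_sublist.mpr ha).append ((List.singleton_sublist.mpr hb).cons_cons m)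
    by_contra! hle
    exact h a m b hsub (lt_of_le_of_ne hle hab) hbm
  have hperm' : u ++ v ~ range' s (n - 1) := List.perm_iff_count.mpr fun a => by
    have hcount := hperm.count_eq a
    simp only [List.count_append, List.count_cons, beq_iff_eq,
      count_of_perm_range' (List.Perm.refl _)] at hcount ⊢
    split_ifs at hcount ⊢ <;> omega
  exact ⟨u, v, rfl, (perm_range'_of_append_of_forall_lt hperm' huv).1,
    (perm_range'_of_append_of_forall_lt hperm' huv).2, h.sublist (by simp),
    h.sublist ((List.sublist_cons_self m v).trans (List.sublist_append_right u _))⟩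

-- `⟨A, u', v, x⟩` in the notation of the module docstring.
@[ext]
structure Blocks where
  high : List ℕ
  mid : List ℕ
  low : List ℕ
  pivot : ℕ

namespace Blocks

def below (b : Blocks) : List ℕ :=
  b.mid.map (· - 1) ++ (b.pivot - 1) :: b.low

def above (b : Blocks) : List ℕ :=
  b.high ++ (b.mid ++ [b.pivot])

def pivotLast (b : Blocks) : List ℕ :=
  b.high ++ (b.below ++ [b.pivot])

def pivotInner (b : Blocks) : List ℕ :=
  b.above ++ (b.low ++ [b.low.length + 1])

structure Valid (n r : ℕ) (b : Blocks) : Prop where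
  high_perm : b.high ~ range' (b.pivot + 1) (n - b.pivot)
  mid_perm : b.mid ~ range' (b.low.length + 2) (b.pivot - 2 - b.low.length)
  low_perm : b.low ~ range' 1 b.low.length
  high_avoids : Avoids132 b.high
  mid_avoids : Avoids132 b.mid
  low_avoids : Avoids132 b.low
  low_length_add_two_le : b.low.length + 2 ≤ b.pivot
  pivot_le : b.pivot ≤ n
  shortCount_high : shortCount b.high + b.pivot = r + 1

variable {n r : ℕ} {b : Blocks}

lemma Valid.map_mid_perm (hb : b.Valid n r) :
    b.mid.map (· - 1) ~ range' (b.low.length + 1) (b.pivot - 2 - b.low.length) :=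
  (hb.mid_perm.map (· - 1)).trans (List.Perm.of_eq (map_sub_one_range' _ _))

lemma Valid.lt_of_mem_high (hb : b.Valid n r) {a : ℕ} (ha : a ∈ b.high) : b.pivot < a := by
  have := mem_range'_of_perm hb.high_perm ha
  omega

lemma Valid.lt_of_mem_mid (hb : b.Valid n r) {a : ℕ} (ha : a ∈ b.mid) : a < b.pivot := by
  have := mem_range'_of_perm hb.mid_perm ha
  omega

lemma Valid.lt_of_mem_low (hb : b.Valid n r) {a : ℕ} (ha : a ∈ b.low) :
    a < b.low.length + 1 := by
  have := mem_range'_of_perm hb.low_perm ha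
  omega

lemma Valid.lt_and_lt_of_mem_map_mid (hb : b.Valid n r) {a : ℕ} (ha : a ∈ b.mid.map (· - 1)) :
    b.low.length < a ∧ a < b.pivot - 1 := by
  have := mem_range'_of_perm hb.map_mid_perm ha
  have := hb.low_length_add_two_le
  omega

lemma Valid.lt_of_mem_below (hb : b.Valid n r) {a : ℕ} (ha : a ∈ b.below) : a < b.pivot := by
  have := hb.low_length_add_two_le
  simp only [below, List.mem_append, List.mem_cons] at ha
  rcases ha with ha | rfl | ha
  · have := hb.lt_and_lt_of_mem_map_mid ha
    omega
  · omega
  · have := hb.lt_of_mem_low ha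
    omega

lemma Valid.lt_of_mem_above (hb : b.Valid n r) {a : ℕ} (ha : a ∈ b.above) :
    b.low.length + 1 < a := by
  have := hb.low_length_add_two_le
  simp only [above, List.mem_append, List.mem_singleton] at ha
  rcases ha with ha | ha | rfl
  · have := hb.lt_of_mem_high ha
    omega
  · have := mem_range'_of_perm hb.mid_perm ha
    omega
  · omega

lemma Valid.pivotLast_perm (hb : b.Valid n r) : b.pivotLast ~ range' 1 n :=
  List.perm_iff_count.mpr fun a => by
    have := hb.low_length_add_two_le
    have := hb.pivot_le
    simp only [pivotLast, below, List.count_append, List.count_cons, List.count_nil, beq_iff_eq,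
      count_of_perm_range' hb.high_perm, count_of_perm_range' hb.map_mid_perm,
      count_of_perm_range' hb.low_perm, count_of_perm_range' (List.Perm.refl _)]
    split_ifs <;> omega

lemma Valid.pivotInner_perm (hb : b.Valid n r) : b.pivotInner ~ range' 1 n :=
  List.perm_iff_count.mpr fun a => by
    have := hb.low_length_add_two_le
    have := hb.pivot_le
    simp only [pivotInner, above, List.count_append, List.count_cons, List.count_nil, beq_iff_eq,
      count_of_perm_range' hb.high_perm, count_of_perm_range' hb.mid_perm,
      count_of_perm_range' hb.low_perm, count_of_perm_range' (List.Perm.refl _)]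
    split_ifs <;> omega

lemma Valid.below_avoids (hb : b.Valid n r) : Avoids132 b.below := by
  refine avoids132_append_cons (hb.mid_avoids.map fun _ _ h => by omega) hb.low_avoids
    (fun a ha => (hb.lt_and_lt_of_mem_map_mid ha).2) (fun a ha => ?_)
    (fun a ha c hc => (Nat.le_of_lt_succ (hb.lt_of_mem_low hc)).trans_lt
      (hb.lt_and_lt_of_mem_map_mid ha).1)
  have := hb.lt_of_mem_low ha
  have := hb.low_length_add_two_le
  omega

lemma Valid.pivotLast_mem (hb : b.Valid n r) :
    b.pivotLast ∈ A132 n r ∧ ∃ x, b.pivotLast.getLast? = some x ∧ 1 < x := by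
  have hnodup := hb.pivotLast_perm.nodup_iff.mpr (List.nodup_range' ..)
  have hshort : shortCount b.pivotLast = r := by
    have hlen := hb.map_mid_perm.length_eq
    have := hb.shortCount_high
    have := hb.low_length_add_two_le
    rw [List.length_range'] at hlen
    rw [pivotLast, shortCount_append_append_singleton (fun _ => hb.lt_of_mem_high)
      fun _ => hb.lt_of_mem_below]
    simp only [below, List.length_append, List.length_cons]
    omega
  refine ⟨⟨hb.pivotLast_perm, (avoidsPat_132_iff hnodup).mpr ?_, hshort⟩, b.pivot,
    by rw [pivotLast, ← List.append_assoc, List.getLast?_concat],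
    by have := hb.low_length_add_two_le; omega⟩
  exact (avoids132_append_append_singleton_iff (fun _ => hb.lt_of_mem_high)
    fun _ => hb.lt_of_mem_below).mpr ⟨hb.high_avoids, hb.below_avoids⟩

lemma Valid.pivotInner_mem (hb : b.Valid n r) : b.pivotInner ∈ A132 n (r - 1) := by
  have hnodup := hb.pivotInner_perm.nodup_iff.mpr (List.nodup_range' ..)
  have hshort : shortCount b.pivotInner = r - 1 := by
    have hlen := hb.mid_perm.length_eq
    have := hb.shortCount_high
    have := hb.low_length_add_two_le
    rw [List.length_range'] at hlen
    rw [pivotInner, shortCount_append_append_singleton (fun _ => hb.lt_of_mem_above)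
      fun _ => hb.lt_of_mem_low, above, shortCount_append_append_singleton
      (fun _ => hb.lt_of_mem_high) fun _ => hb.lt_of_mem_mid]
    omega
  refine ⟨hb.pivotInner_perm, (avoidsPat_132_iff hnodup).mpr ?_, hshort⟩
  exact (avoids132_append_append_singleton_iff (fun _ => hb.lt_of_mem_above)
    fun _ => hb.lt_of_mem_low).mpr ⟨(avoids132_append_append_singleton_iff
      (fun _ => hb.lt_of_mem_high) fun _ => hb.lt_of_mem_mid).mpr
      ⟨hb.high_avoids, hb.mid_avoids⟩, hb.low_avoids⟩

lemma Valid.map_add_one_map_sub_one_mid (hb : b.Valid n r) : (b.mid.map (· - 1)).map (· + 1) = b.mid := by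
  rw [List.map_map]
  refine (List.map_congr_left fun a ha => ?_).trans (List.map_id _)
  have := mem_range'_of_perm hb.mid_perm ha
  simp only [Function.comp_apply, id_eq]
  omega

lemma pivotLast_injOn : Set.InjOn pivotLast {b | b.Valid n r} := by
  intro b hb b' hb' h
  obtain ⟨hhigh, hbelow, hpivot⟩ := append_append_singleton_inj
    (fun _ => hb.lt_of_mem_high) (fun _ => hb.lt_of_mem_below)
    (fun _ => hb'.lt_of_mem_high) (fun _ => hb'.lt_of_mem_below) h
  have hnot : b'.pivot - 1 ∉ b.mid.map (· - 1) ∧ b'.pivot - 1 ∉ b.low := by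
    rw [← hpivot]
    refine ⟨fun ha => (hb.lt_and_lt_of_mem_map_mid ha).2.false, fun ha => ?_⟩
    have := hb.lt_of_mem_low ha
    have := hb.low_length_add_two_le
    omega
  obtain ⟨hmid, -, hlow⟩ := (List.append_cons_inj_of_notMem hnot.1 hnot.2).mp hbelow
  exact Blocks.ext hhigh (by rw [← hb.map_add_one_map_sub_one_mid, hmid, hb'.map_add_one_map_sub_one_mid]) hlow hpivot

lemma pivotInner_injOn : Set.InjOn pivotInner {b | b.Valid n r} := by
  intro b hb b' hb' h
  obtain ⟨habove, hlow, -⟩ := append_append_singleton_inj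
    (fun _ => hb.lt_of_mem_above) (fun _ => hb.lt_of_mem_low)
    (fun _ => hb'.lt_of_mem_above) (fun _ => hb'.lt_of_mem_low) h
  obtain ⟨hhigh, hmid, hpivot⟩ := append_append_singleton_inj
    (fun _ => hb.lt_of_mem_high) (fun _ => hb.lt_of_mem_mid)
    (fun _ => hb'.lt_of_mem_high) (fun _ => hb'.lt_of_mem_mid) habove
  exact Blocks.ext hhigh hmid hlow hpivot

lemma exists_valid_pivotLast_eq {l : List ℕ} {x : ℕ} (hl : l ∈ A132 n r)
    (hx : l.getLast? = some x) (hx1 : 1 < x) : ∃ b : Blocks, b.Valid n r ∧ b.pivotLast = l := by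
  obtain ⟨hperm, havoids, hshort⟩ := hl
  obtain ⟨-, hxn, A, β, rfl, hA, hβ, hAav, hβav⟩ :=
    ((avoidsPat_132_iff (hperm.nodup_iff.mpr (List.nodup_range' ..))).mp havoids
      ).exists_eq_append_append_getLast hperm hx
  obtain ⟨u, v, rfl, hv, hu, huav, hvav⟩ :=
    hβav.exists_eq_append_cons_max hβ (m := x - 1) (by omega) (by omega)
  have hlen : u.length + v.length + 2 = x := by
    have := hβ.length_eq
    simp only [List.length_append, List.length_cons, List.length_range'] at this
    omega
  rw [shortCount_append_append_singleton (fun a ha => by have := mem_range'_of_perm hA ha; omega)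
    (fun a ha => by have := mem_range'_of_perm hβ ha; omega)] at hshort
  simp only [List.length_append, List.length_cons] at hshort
  have hmid : u.map (· + 1) ~ range' (v.length + 2) (x - 2 - v.length) := by
    have := (hu.map (· + 1)).trans (.of_eq (map_add_one_range' _ _))
    rwa [show 1 + v.length + 1 = v.length + 2 by omega,
      show u.length = x - 2 - v.length by omega] at this
  refine ⟨⟨A, u.map (· + 1), v, x⟩, ⟨(show 1 + n - (x + 1) = n - x by omega) ▸ hA, hmid, hv,
    hAav, huav.map fun _ _ h => by omega, hvav, by dsimp only; omega, by dsimp only; omega,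
    by dsimp only; omega⟩, ?_⟩
  simp [pivotLast, below, Function.comp_def]

lemma exists_valid_pivotInner_eq {l : List ℕ} (hr1 : 1 ≤ r) (hr2 : r ≤ n - 1)
    (hl : l ∈ A132 n (r - 1)) : ∃ b : Blocks, b.Valid n r ∧ b.pivotInner = l := by
  obtain ⟨hperm, havoids, hshort⟩ := hl
  obtain ⟨y, hy⟩ : ∃ y, l.getLast? = some y := Option.ne_none_iff_exists'.mp fun h => by
    have := hperm.length_eq
    simp [List.getLast?_eq_none_iff.mp h] at this
    omega
  obtain ⟨hy1, hyn, A, B, rfl, hA, hB, hAav, hBav⟩ :=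
    ((avoidsPat_132_iff (hperm.nodup_iff.mpr (List.nodup_range' ..))).mp havoids
      ).exists_eq_append_append_getLast hperm hy
  have hBlen : B.length = y - 1 := by simpa using hB.length_eq
  rw [shortCount_append_append_singleton (fun a ha => by have := mem_range'_of_perm hA ha; omega)
    (fun a ha => by have := mem_range'_of_perm hB ha; omega)] at hshort
  -- `A` is nonempty: otherwise `y = n` and `l` would have `n - 1 ≥ r` short values
  obtain ⟨x, hx⟩ : ∃ x, A.getLast? = some x := Option.ne_none_iff_exists'.mp fun h => by
    have := hA.length_eq
    simp [List.getLast?_eq_none_iff.mp h, shortCount_nil] at this hshort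
    omega
  obtain ⟨hx1, hxn, al, h, rfl, hal, hh, halav, hhav⟩ :=
    hAav.exists_eq_append_append_getLast hA hx
  have hhlen : h.length = x - (y + 1) := by simpa using hh.length_eq
  rw [shortCount_append_append_singleton (fun a ha => by have := mem_range'_of_perm hal ha; omega)
    (fun a ha => by have := mem_range'_of_perm hh ha; omega)] at hshort
  have hmid : h ~ range' (B.length + 2) (x - 2 - B.length) := by
    rwa [show B.length + 2 = y + 1 by omega, show x - 2 - B.length = x - (y + 1) by omega]
  refine ⟨⟨al, h, B, x⟩, ⟨(show y + 1 + (1 + n - (y + 1)) - (x + 1) = n - x by omega) ▸ hal,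
    hmid, hBlen ▸ hB, halav, hhav, hBav, by dsimp only; omega, by dsimp only; omega,
    by dsimp only; omega⟩, ?_⟩
  simp [pivotInner, above, hBlen, Nat.sub_add_cancel hy1]

end Blocks

theorem card_last_gt_one_general (n r : ℕ) (hr1 : 1 ≤ r) (hr2 : r ≤ n - 1) :
    {l | l ∈ A132 n r ∧ ∃ x, l.getLast? = some x ∧ 1 < x}.ncard =
      (A132 n (r - 1)).ncard := by
  have hlast : {l | l ∈ A132 n r ∧ ∃ x, l.getLast? = some x ∧ 1 < x} =
      Blocks.pivotLast '' {b | b.Valid n r} := by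
    ext l
    constructor
    · rintro ⟨hl, x, hx, hx1⟩
      exact Blocks.exists_valid_pivotLast_eq hl hx hx1
    · rintro ⟨b, hb, rfl⟩
      exact hb.pivotLast_mem
  have hinner : A132 n (r - 1) = Blocks.pivotInner '' {b | b.Valid n r} := by
    ext l
    constructor
    · exact Blocks.exists_valid_pivotInner_eq hr1 hr2
    · rintro ⟨b, hb, rfl⟩
      exact hb.pivotInner_mem
  rw [hlast, hinner, Blocks.pivotLast_injOn.ncard_image,
    Blocks.pivotInner_injOn.ncard_image]

/-- For `n ≥ 2` and `1 ≤ r ≤ n-1`, the number of 132-avoiding permutations of length `n`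
with exactly `r` short values whose last entry is greater than `1` equals `|A(n, r-1)|`. -/
theorem card_last_gt_one (n r : ℕ) (hn : 2 ≤ n) (hr1 : 1 ≤ r) (hr2 : r ≤ n - 1) :
    {l | l ∈ A132 n r ∧ ∃ x, l.getLast? = some x ∧ 1 < x}.ncard =
      (A132 n (r - 1)).ncard :=
  card_last_gt_one_general n r hr1 hr2
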